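/- arXiv:1109.6515 — 2 statements merged into one kernel-verified Lean document; each statement's English description precedes it below -/
import Mathlib

section
/- Let K be a field, L/K a field extension, and C a K-linear abelian category. Then the base change category C_L is an abelian category: every morphism in C_L has a kernel and a cokernel, every monomorphism is a kernel, and every epimorphism is a cokernel. -/
/-!
An `L`-action on an object of `C` restricts to any subobject stable under it, and the
`K`-algebra axioms for the restriction follow from those on the ambient object by cancelling
the monomorphism (dually for quotients). Kernels and cokernels of `f.hom` are stable, so they
become kernels and cokernels in `C_L`; finite biproducts carry the diagonal action.
The same cancellation shows that `a` is `L`-linear whenever `a ≫ f.hom = k.hom` with `f.hom`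
mono. Hence a monomorphism `f` of `C_L` (mono in `C`, since its kernel in `C_L` lies over its
kernel in `C`) is the kernel in `C_L` of its cokernel, because it is so in `C`. Dually for
epimorphisms.
-/

open CategoryTheory CategoryTheory.Limits

universe v u

variable (K : Type*) [Field K] (L : Type*) [Field L] [Algebra K L]
variable (C : Type u) [Category.{v} C] [Preadditive C] [Linear K C]

structure BaseChange where
  obj : C
  str : L →ₐ[K] End obj

namespace BaseChange

variable {K L C}

@[ext]
structure Hom (X Y : BaseChange K L C) where
  hom : X.obj ⟶ Y.obj
  comm : ∀ l : L, X.str l ≫ hom = hom ≫ Y.str l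

instance : Category (BaseChange K L C) where
  Hom X Y := Hom X Y
  id X := ⟨𝟙 X.obj, fun l => by simp⟩
  comp {X Y Z} f g := ⟨f.hom ≫ g.hom, fun l => by
    rw [← Category.assoc, f.comm, Category.assoc, g.comm, Category.assoc]⟩

@[ext]
lemma hom_ext {X Y : BaseChange K L C} {f g : X ⟶ Y} (h : f.hom = g.hom) : f = g :=
  Hom.ext h

@[simp] lemma id_hom (X : BaseChange K L C) : Hom.hom (𝟙 X) = 𝟙 X.obj := rfl

@[simp] lemma comp_hom {X Y Z : BaseChange K L C} (f : X ⟶ Y) (g : Y ⟶ Z) :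
    (f ≫ g).hom = f.hom ≫ g.hom := rfl

section Preadditive

variable {X Y : BaseChange K L C}

instance : Zero (X ⟶ Y) := ⟨⟨0, fun l => by simp⟩⟩
instance : Add (X ⟶ Y) :=
  ⟨fun f g => ⟨f.hom + g.hom, fun l => by
    simp [Preadditive.comp_add, Preadditive.add_comp, f.comm, g.comm]⟩⟩
instance : Neg (X ⟶ Y) :=
  ⟨fun f => ⟨-f.hom, fun l => by simp [f.comm]⟩⟩
instance : Sub (X ⟶ Y) :=
  ⟨fun f g => ⟨f.hom - g.hom, fun l => by
    simp [Preadditive.comp_sub, Preadditive.sub_comp, f.comm, g.comm]⟩⟩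
instance : SMul ℕ (X ⟶ Y) :=
  ⟨fun n f => ⟨n • f.hom, fun l => by simp [f.comm]⟩⟩
instance : SMul ℤ (X ⟶ Y) :=
  ⟨fun n f => ⟨n • f.hom, fun l => by simp [f.comm]⟩⟩

@[simp] lemma zero_hom : (0 : X ⟶ Y).hom = 0 := rfl
@[simp] lemma add_hom (f g : X ⟶ Y) : (f + g).hom = f.hom + g.hom := rfl
@[simp] lemma neg_hom (f : X ⟶ Y) : (-f).hom = -f.hom := rfl
@[simp] lemma sub_hom (f g : X ⟶ Y) : (f - g).hom = f.hom - g.hom := rfl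

instance : AddCommGroup (X ⟶ Y) :=
  Function.Injective.addCommGroup (Hom.hom : (X ⟶ Y) → (X.obj ⟶ Y.obj))
    (fun _ _ h => Hom.ext h) rfl (fun _ _ => rfl) (fun _ => rfl) (fun _ _ => rfl)
    (fun _ _ => rfl) (fun _ _ => rfl)

instance : Preadditive (BaseChange K L C) where
  add_comp _ _ _ f f' g := by apply hom_ext; simp [Preadditive.add_comp]
  comp_add _ _ _ f g g' := by apply hom_ext; simp [Preadditive.comp_add]

end Preadditive

end BaseChange

namespace CategoryTheory.Linear

variable {R : Type*} [CommSemiring R] {D : Type*} [Category D] [Preadditive D] [Linear R D]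
  {P Q : D}

lemma algebraMap_end_comp (r : R) (f : P ⟶ Q) :
    algebraMap R (End P) r ≫ f = r • f :=
  (Linear.smul_comp P P Q r (𝟙 P) f).trans (by rw [Category.id_comp])

lemma comp_algebraMap_end (f : P ⟶ Q) (r : R) :
    f ≫ algebraMap R (End Q) r = r • f :=
  (Linear.comp_smul P Q Q f r (𝟙 Q)).trans (by rw [Category.comp_id])

end CategoryTheory.Linear

namespace BaseChange

variable {K L C} {X Y Z : BaseChange K L C} {P : C}

noncomputable def strOfMono (i : P ⟶ X.obj) [Mono i] (φ : L → End P)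
    (hφ : ∀ l, φ l ≫ i = i ≫ X.str l) : L →ₐ[K] End P where
  toFun := φ
  map_one' := by rw [← cancel_mono i, hφ, map_one, End.one_def, End.one_def]; simp
  map_mul' a b := by
    rw [← cancel_mono i, hφ, map_mul, End.mul_def, End.mul_def, Category.assoc, hφ,
      reassoc_of% hφ]
  map_zero' := by rw [← cancel_mono i, hφ, map_zero, zero_comp, comp_zero]
  map_add' a b := by
    rw [← cancel_mono i, hφ, map_add, Preadditive.comp_add, Preadditive.add_comp, hφ, hφ]
  commutes' k := by
    rw [← cancel_mono i, hφ, AlgHom.commutes, Linear.algebraMap_end_comp,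
      Linear.comp_algebraMap_end]

noncomputable def strOfEpi (p : X.obj ⟶ P) [Epi p] (φ : L → End P)
    (hφ : ∀ l, X.str l ≫ p = p ≫ φ l) : L →ₐ[K] End P where
  toFun := φ
  map_one' := by rw [← cancel_epi p, ← hφ, map_one, End.one_def, End.one_def]; simp
  map_mul' a b := by
    rw [← cancel_epi p, ← hφ, map_mul, End.mul_def, End.mul_def, ← Category.assoc, ← hφ,
      Category.assoc, hφ, Category.assoc]
  map_zero' := by rw [← cancel_epi p, ← hφ, map_zero, zero_comp, comp_zero]
  map_add' a b := by
    rw [← cancel_epi p, ← hφ, map_add, Preadditive.comp_add, Preadditive.add_comp, hφ, hφ]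
  commutes' k := by
    rw [← cancel_epi p, ← hφ, AlgHom.commutes, Linear.algebraMap_end_comp,
      Linear.comp_algebraMap_end]

def homOfCompMono {W : BaseChange K L C} (f : X ⟶ Y) [Mono f.hom] (a : W.obj ⟶ X.obj)
    {k : W ⟶ Y} (h : a ≫ f.hom = k.hom) : W ⟶ X :=
  ⟨a, fun l => by
    rw [← cancel_mono f.hom, Category.assoc, Category.assoc, f.comm, h, reassoc_of% h, k.comm]⟩

def homOfEpiComp {W : BaseChange K L C} (f : X ⟶ Y) [Epi f.hom] (a : Y.obj ⟶ W.obj)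
    {k : X ⟶ W} (h : f.hom ≫ a = k.hom) : Y ⟶ W :=
  ⟨a, fun l => by
    rw [← cancel_epi f.hom, ← Category.assoc, ← Category.assoc, ← f.comm, Category.assoc, h,
      k.comm]⟩

lemma mono_of_mono_hom (f : X ⟶ Y) [Mono f.hom] : Mono f :=
  ⟨fun _ _ e => hom_ext ((cancel_mono f.hom).1 (congrArg Hom.hom e))⟩

lemma epi_of_epi_hom (f : X ⟶ Y) [Epi f.hom] : Epi f :=
  ⟨fun _ _ e => hom_ext ((cancel_epi f.hom).1 (congrArg Hom.hom e))⟩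

def isLimitKernelFork {f : X ⟶ Y} {g : Y ⟶ Z} (w : f ≫ g = 0)
    (h : IsLimit (KernelFork.ofι f.hom (congrArg Hom.hom w : f.hom ≫ g.hom = 0))) :
    IsLimit (KernelFork.ofι f w) :=
  have : Mono f.hom := mono_of_isLimit_fork h
  have := mono_of_mono_hom f
  KernelFork.IsLimit.ofι' f w fun k hk =>
    let l := KernelFork.IsLimit.lift' h k.hom (congrArg Hom.hom hk)
    ⟨homOfCompMono f l.1 l.2, hom_ext l.2⟩

def isColimitCokernelCofork {f : X ⟶ Y} {g : Y ⟶ Z} (w : f ≫ g = 0)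
    (h : IsColimit (CokernelCofork.ofπ g.hom (congrArg Hom.hom w : f.hom ≫ g.hom = 0))) :
    IsColimit (CokernelCofork.ofπ g w) :=
  have : Epi g.hom := epi_of_isColimit_cofork h
  have := epi_of_epi_hom g
  CokernelCofork.IsColimit.ofπ' g w fun k hk =>
    let l := CokernelCofork.IsColimit.desc' h k.hom (congrArg Hom.hom hk)
    ⟨homOfEpiComp g l.1 l.2, hom_ext l.2⟩

section Kernels

variable [HasKernels C] (f : X ⟶ Y)

noncomputable def kernelObj : BaseChange K L C where
  obj := kernel f.hom
  str := strOfMono (kernel.ι f.hom)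
    (fun l => kernel.lift f.hom (kernel.ι f.hom ≫ X.str l)
      (by rw [Category.assoc, f.comm, kernel.condition_assoc, zero_comp]))
    (fun _ => kernel.lift_ι _ _ _)

noncomputable def kernelι : kernelObj f ⟶ X :=
  ⟨kernel.ι f.hom, fun _ => kernel.lift_ι _ _ _⟩

lemma kernelι_comp : kernelι f ≫ f = 0 := hom_ext (kernel.condition f.hom)

instance : HasKernels (BaseChange K L C) :=
  ⟨fun f => HasLimit.mk ⟨_, isLimitKernelFork (kernelι_comp f) (kernelIsKernel f.hom)⟩⟩

lemma mono_hom [Mono f] : Mono f.hom :=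
  Preadditive.mono_of_kernel_zero (congrArg Hom.hom (zero_of_comp_mono f (kernelι_comp f)))

end Kernels

section Cokernels

variable [HasCokernels C] (f : X ⟶ Y)

noncomputable def cokernelObj : BaseChange K L C where
  obj := cokernel f.hom
  str := strOfEpi (cokernel.π f.hom)
    (fun l => cokernel.desc f.hom (Y.str l ≫ cokernel.π f.hom)
      (by rw [← Category.assoc, ← f.comm, Category.assoc, cokernel.condition, comp_zero]))
    (fun _ => (cokernel.π_desc _ _ _).symm)

noncomputable def cokernelπ : Y ⟶ cokernelObj f :=
  ⟨cokernel.π f.hom, fun _ => (cokernel.π_desc _ _ _).symm⟩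

lemma comp_cokernelπ : f ≫ cokernelπ f = 0 := hom_ext (cokernel.condition f.hom)

instance : HasCokernels (BaseChange K L C) :=
  ⟨fun f => HasColimit.mk
    ⟨_, isColimitCokernelCofork (comp_cokernelπ f) (cokernelIsCokernel f.hom)⟩⟩

lemma epi_hom [Epi f] : Epi f.hom :=
  Preadditive.epi_of_cokernel_zero (congrArg Hom.hom (zero_of_epi_comp f (comp_cokernelπ f)))

end Cokernels

lemma sum_hom {ι : Type*} (s : Finset ι) (f : ι → (X ⟶ Y)) :
    (∑ i ∈ s, f i).hom = ∑ i ∈ s, (f i).hom :=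
  map_sum ({ toFun := Hom.hom, map_zero' := rfl, map_add' := fun _ _ => rfl } :
    (X ⟶ Y) →+ (X.obj ⟶ Y.obj)) f s

section Biproducts

variable [HasFiniteBiproducts C] {J : Type*} [Finite J] (X : J → BaseChange K L C)

noncomputable def biproductStr : L →ₐ[K] End (⨁ fun j => (X j).obj) where
  toFun l := biproduct.map fun j => (X j).str l
  map_one' := by apply biproduct.hom_ext; intro; simp [End.one_def]
  map_mul' a b := by apply biproduct.hom_ext; intro; simp [End.mul_def]
  map_zero' := by apply biproduct.hom_ext; intro; simp
  map_add' a b := by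
    apply biproduct.hom_ext; intro
    rw [Preadditive.add_comp]; simp only [biproduct.map_π, map_add]; rw [Preadditive.comp_add]
  commutes' k := by
    apply biproduct.hom_ext; intro
    simp [Linear.algebraMap_end_comp, Linear.comp_algebraMap_end]

noncomputable def bicone : Bicone X where
  pt := ⟨⨁ fun j => (X j).obj, biproductStr X⟩
  π j := ⟨biproduct.π (fun j => (X j).obj) j, fun l => by simp [biproductStr]⟩
  ι j := ⟨biproduct.ι (fun j => (X j).obj) j, fun l => by simp [biproductStr]⟩
  ι_π j j' := by
    split_ifs with h
    · subst h; ext; simp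
    · ext; exact biproduct.ι_π_ne _ h

instance : HasFiniteBiproducts (BaseChange K L C) :=
  ⟨fun _ => ⟨fun X =>
    hasBiproduct_of_total (bicone X) (hom_ext ((sum_hom _ _).trans biproduct.total))⟩⟩

end Biproducts

section Abelian

variable {C : Type u} [Category.{v} C] [Abelian C] [Linear K C]

instance : IsNormalMonoCategory (BaseChange K L C) where
  normalMonoOfMono f _ :=
    have := mono_hom f
    ⟨{ Z := cokernelObj f
       g := cokernelπ f
       w := comp_cokernelπ f
       isLimit := isLimitKernelFork _ <|
        Abelian.monoIsKernelOfCokernel (Cofork.ofπ _ _) (cokernelIsCokernel f.hom) }⟩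

instance : IsNormalEpiCategory (BaseChange K L C) where
  normalEpiOfEpi f _ :=
    have := epi_hom f
    ⟨{ W := kernelObj f
       g := kernelι f
       w := kernelι_comp f
       isColimit := isColimitCokernelCofork _ <|
        Abelian.epiIsCokernelOfKernel (Fork.ofι _ _) (kernelIsKernel f.hom) }⟩

end Abelian

end BaseChange

/-- **Statement 2.** If `C` is a `K`-linear abelian category, then the base change
category `C_L` is abelian. -/
theorem baseChange_abelian (K : Type*) [Field K] (L : Type*) [Field L] [Algebra K L]
    (C : Type u) [Category.{v} C] [Abelian C] [CategoryTheory.Linear K C] :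
    Nonempty (Abelian (BaseChange K L C)) :=
  have := Abelian.hasFiniteBiproducts (C := C)
  ⟨{ }⟩
end

section
/- Let L/K be a finite Galois extension of fields with Galois group G = Gal(L/K). Then the K-algebra homomorphism L ⊗_K L → (G → L), determined on pure tensors by l₁ ⊗ l₂ ↦ (g ↦ g(l₁) · l₂), from the tensor product algebra to the K-algebra of L-valued functions on G with pointwise operations, is bijective. -/
/-!
By Dedekind's independence of characters, no nonzero `L`-linear functional on `Gal(L/K) → L`
kills all the functions `g ↦ g a`, so these span `Gal(L/K) → L` over `L`. The image of
`galoisPairing` contains them and is stable under multiplication by the constants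
`galoisPairing (1 ⊗ c)`, so the map is surjective. For `L/K` Galois both sides have
`K`-dimension `[L : K]²`, hence it is also injective.
-/

open scoped TensorProduct

/-- The canonical `K`-algebra homomorphism `L ⊗[K] L → (Gal(L/K) → L)` determined by
`l₁ ⊗ l₂ ↦ (g ↦ g l₁ * l₂)`. -/
noncomputable def galoisPairing (K : Type*) [Field K] (L : Type*) [Field L] [Algebra K L] :
    L ⊗[K] L →ₐ[K] ((L ≃ₐ[K] L) → L) :=
  Algebra.TensorProduct.lift
    (Pi.algHom K _ fun g : L ≃ₐ[K] L => (g : L →ₐ[K] L))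
    (Pi.constAlgHom K (L ≃ₐ[K] L) L)
    (fun _ _ => Commute.all _ _)

theorem Module.Dual.pi_apply_eq_sum_mul {B ι : Type*} [CommRing B] [Fintype ι] [DecidableEq ι]
    (f : Module.Dual B (ι → B)) (v : ι → B) :
    f v = ∑ i, f (Pi.single i 1) * v i := by
  conv_lhs => rw [← Finset.univ_sum_single v]
  refine (map_sum f _ _).trans (Finset.sum_congr rfl fun i _ => ?_)
  rw [mul_comm, ← smul_eq_mul, ← map_smul, ← Pi.single_smul', smul_eq_mul, mul_one]

theorem span_range_eval_algHom_eq_top {R A B ι : Type*} [CommSemiring R] [Semiring A]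
    [Algebra R A] [Field B] [Algebra R B] [Finite ι] {σ : ι → A →ₐ[R] B}
    (hσ : Function.Injective σ) :
    Submodule.span B (Set.range fun a : A => fun i => σ i a) = ⊤ := by
  classical
  cases nonempty_fintype ι
  rw [← Submodule.dualAnnihilator_eq_bot_iff, Submodule.eq_bot_iff]
  intro f hf
  rw [Submodule.mem_dualAnnihilator] at hf
  have hcomb : ∑ i, f (Pi.single i 1) • (σ i).toLinearMap = 0 := by
    ext a
    have := hf _ (Submodule.subset_span ⟨a, rfl⟩)
    rw [f.pi_apply_eq_sum_mul] at this
    simpa using this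
  have hzero := Fintype.linearIndependent_iff.1
    ((linearIndependent_toLinearMap R A B).comp σ hσ) _ hcomb
  ext i
  simpa using hzero i

section galoisPairing

variable (K L : Type*) [Field K] [Field L] [Algebra K L]

@[simp]
theorem galoisPairing_tmul_apply (a b : L) (g : L ≃ₐ[K] L) :
    galoisPairing K L (a ⊗ₜ b) g = g a * b :=
  rfl

theorem galoisPairing_one_tmul_mul (c : L) (u : L ⊗[K] L) :
    galoisPairing K L ((1 ⊗ₜ c) * u) = c • galoisPairing K L u := by
  ext g
  simp [mul_comm]

theorem span_range_eval_subset_range_galoisPairing :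
    (Submodule.span L (Set.range fun (a : L) (g : L ≃ₐ[K] L) => g a) : Set ((L ≃ₐ[K] L) → L)) ⊆
      Set.range (galoisPairing K L) := by
  intro v hv
  induction hv using Submodule.span_induction with
  | mem v hv =>
    obtain ⟨a, rfl⟩ := hv
    exact ⟨a ⊗ₜ 1, by ext; simp⟩
  | zero => exact ⟨0, map_zero _⟩
  | add v w _ _ hv hw =>
    obtain ⟨u, rfl⟩ := hv
    obtain ⟨u', rfl⟩ := hw
    exact ⟨u + u', map_add _ u u'⟩
  | smul c v _ hv =>
    obtain ⟨u, rfl⟩ := hv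
    exact ⟨(1 ⊗ₜ c) * u, galoisPairing_one_tmul_mul K L c u⟩

theorem galoisPairing_surjective [FiniteDimensional K L] :
    Function.Surjective (galoisPairing K L) := fun _ =>
  span_range_eval_subset_range_galoisPairing K L <|
    (span_range_eval_algHom_eq_top AlgEquiv.coe_toAlgHom_injective).ge Submodule.mem_top

theorem finrank_tensorProduct_self_eq_finrank_pi [FiniteDimensional K L] [IsGalois K L] :
    Module.finrank K (L ⊗[K] L) = Module.finrank K ((L ≃ₐ[K] L) → L) := by
  rw [Module.finrank_tensorProduct, Module.finrank_pi_fintype, Finset.sum_const, smul_eq_mul,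
    Finset.card_univ, Fintype.card_eq_nat_card, IsGalois.card_aut_eq_finrank]

end galoisPairing

/-- **Statement 17.** For a finite Galois extension `L/K` with Galois group
`G = Gal(L/K)`, the `K`-algebra homomorphism `L ⊗[K] L → (G → L)` determined by
`l₁ ⊗ l₂ ↦ (g ↦ g l₁ · l₂)` is bijective. -/
theorem galoisPairing_bijective
    (K : Type*) [Field K] (L : Type*) [Field L] [Algebra K L]
    [FiniteDimensional K L] [IsGalois K L] :
    Function.Bijective (galoisPairing K L) :=
  have hsurj := galoisPairing_surjective K L
  ⟨(LinearMap.injective_iff_surjective_of_finrank_eq_finrank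
    (finrank_tensorProduct_self_eq_finrank_pi K L)).2 hsurj, hsurj⟩
end
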